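/- arXiv:1709.05407 — 2 statements merged into one kernel-verified Lean document; each statement's English description precedes it below -/
import Mathlib

section
/- Let (X,τ) be a locally solid vector lattice and A an ideal of X. If the unbounded topology u_Aτ on X is submetrizable (i.e. finer than some metrizable linear topology on X), then there exists an at most countable subset of A that is a countable order basis for X. -/
/-!
Every neighbourhood of zero of `u_A τ` contains the disjoint complement `Fᵈ` of a finite
`F ⊆ A₊`. A coarser metrizable linear topology is Hausdorff with a countable base at zero, so
taking one such `F` for each basic neighbourhood gives a countable `B ⊆ A₊` with `Bᵈ = {0}`.
In an Archimedean space, any band `C` with `Cᵈ = {0}` contains every `y ≥ 0`, since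
`y = sup (C ∩ [0, y])`; hence `B` generates `X` as a band.
-/

open Filter Set Topology

variable {X : Type*} [Lattice X] [AddCommGroup X] [Module ℝ X]
  [CovariantClass X X (· + ·) (· ≤ ·)] [PosSMulMono ℝ X]

/-- The Archimedean property for a lattice-ordered group. -/
def VLArchimedean (X : Type*) [Lattice X] [AddCommGroup X] : Prop :=
  ∀ x y : X, 0 ≤ x → (∀ n : ℕ, n • x ≤ y) → x = 0

/-- A set is solid if `x ∈ S` and `|y| ≤ |x|` imply `y ∈ S`. -/
def IsSolid (S : Set X) : Prop := ∀ ⦃x y : X⦄, x ∈ S → |y| ≤ |x| → y ∈ S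

/-- A locally solid (linear) topology on a vector lattice. -/
def IsLocallySolidTop (τ : TopologicalSpace X) : Prop :=
  @IsTopologicalAddGroup X τ _ ∧ @ContinuousSMul ℝ X _ _ τ ∧
    ∀ U ∈ @nhds X τ 0, ∃ V ∈ @nhds X τ 0, IsSolid V ∧ V ⊆ U

/-- An order ideal: a solid linear subspace. -/
def IsOrderIdeal (A : Set X) : Prop :=
  0 ∈ A ∧ (∀ x ∈ A, ∀ y ∈ A, x + y ∈ A) ∧ (∀ (c : ℝ), ∀ x ∈ A, c • x ∈ A) ∧ IsSolid A

/-- The order ideal generated by a set. -/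
def idealGenerated (A : Set X) : Set X := ⋂₀ {I | IsOrderIdeal I ∧ A ⊆ I}

/-- A band: an order ideal closed under existing suprema. -/
def IsBand (B : Set X) : Prop :=
  IsOrderIdeal B ∧ ∀ D ⊆ B, ∀ x : X, IsLUB D x → x ∈ B

/-- The band generated by a set. -/
def bandGenerated (A : Set X) : Set X := ⋂₀ {B | IsBand B ∧ A ⊆ B}

/-- `A` is a countable order basis: `A` is at most countable and generates `X` as a band. -/
def CountableOrderBasis (A : Set X) : Prop := A.Countable ∧ bandGenerated A = Set.univ

/-- The neighbourhood filter of zero of the unbounded topology `u_A τ`: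
generated by the sets `{x : |x| ⊓ a ∈ U}` for `U` a `τ`-neighbourhood of zero, `a ∈ A₊`. -/
def unbNhdsZero (τ : TopologicalSpace X) (A : Set X) : Filter X :=
  ⨅ a ∈ {a ∈ A | 0 ≤ a}, Filter.comap (fun x => |x| ⊓ a) (@nhds X τ 0)

/-- The unbounded topology `u_A τ` induced by the ideal `A`; `u τ = unbTopology τ Set.univ`. -/
def unbTopology (τ : TopologicalSpace X) (A : Set X) : TopologicalSpace X :=
  TopologicalSpace.mkOfNhds fun x => Filter.map (x + ·) (unbNhdsZero τ A)

/-- A sublattice/ideal is order dense if every nonzero positive vector dominates a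
nonzero positive vector of it. -/
def OrderDense (A : Set X) : Prop := ∀ x : X, 0 < x → ∃ y ∈ A, 0 < y ∧ y ≤ x

/-- A minimal topology: a Hausdorff locally solid topology with no strictly coarser
Hausdorff locally solid topology. (In Mathlib's order on `TopologicalSpace`,
`τ ≤ σ` means `τ` is finer than `σ`.) -/
def IsMinimalTop (τ : TopologicalSpace X) : Prop :=
  IsLocallySolidTop τ ∧ @T2Space X τ ∧
    ∀ σ : TopologicalSpace X, IsLocallySolidTop σ → @T2Space X σ → τ ≤ σ → σ = τ

/-- The countable sup property. -/
def CountableSupProperty (Y : Type*) [Lattice Y] : Prop :=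
  ∀ S : Set Y, ∀ x : Y, S.Nonempty → IsLUB S x → ∃ C ⊆ S, C.Countable ∧ IsLUB C x

/-- Order convergence to zero of a net: there is a downward directed set `D` with
infimum `0`, each member of which eventually dominates `|x α|`. -/
def OrderNull {ι : Type*} [Preorder ι] (x : ι → X) : Prop :=
  ∃ D : Set X, D.Nonempty ∧ (∀ a ∈ D, ∀ b ∈ D, ∃ c ∈ D, c ≤ a ∧ c ≤ b) ∧
    IsGLB D 0 ∧ ∀ d ∈ D, ∃ α₀ : ι, ∀ α, α₀ ≤ α → |x α| ≤ d

/-- Unbounded order (uo-) convergence to zero of a net. -/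
def UoNull {ι : Type*} [Preorder ι] (x : ι → X) : Prop :=
  ∀ u : X, 0 ≤ u → OrderNull (fun α => |x α| ⊓ u)

/-- A set is topologically bounded if it is absorbed by every neighbourhood of zero. -/
def TopBounded (τ : TopologicalSpace X) (S : Set X) : Prop :=
  ∀ U ∈ @nhds X τ 0, ∃ l : ℝ, 0 < l ∧ ∀ x ∈ S, l • x ∈ U

/-- A locally bounded topology: it has a topologically bounded neighbourhood of zero. -/
def LocallyBoundedTop (τ : TopologicalSpace X) : Prop :=
  ∃ V ∈ @nhds X τ 0, TopBounded τ V

/-- A submetrizable topology: finer than some metrizable linear topology.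
(In Mathlib's order on `TopologicalSpace`, `τ ≤ σ` means `τ` is finer than `σ`.) -/
def Submetrizable (τ : TopologicalSpace X) : Prop :=
  ∃ σ : TopologicalSpace X, @IsTopologicalAddGroup X σ _ ∧ @ContinuousSMul ℝ X _ _ σ ∧
    @TopologicalSpace.MetrizableSpace X σ ∧ τ ≤ σ

/-- A Riesz submetrizable topology: finer than some metrizable locally solid topology. -/
def RieszSubmetrizable (τ : TopologicalSpace X) : Prop :=
  ∃ σ : TopologicalSpace X, IsLocallySolidTop σ ∧ @TopologicalSpace.MetrizableSpace X σ ∧ τ ≤ σ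

/-- Dedekind (order) completeness. -/
def DedekindComplete (Y : Type*) [Lattice Y] : Prop :=
  ∀ S : Set Y, S.Nonempty → BddAbove S → ∃ x, IsLUB S x

/-- Lateral completeness: every nonempty set of pairwise disjoint positive vectors
has a supremum. -/
def LaterallyComplete (Y : Type*) [Lattice Y] [AddCommGroup Y] : Prop :=
  ∀ S : Set Y, S.Nonempty → (∀ x ∈ S, 0 ≤ x) → (S.Pairwise fun a b => a ⊓ b = 0) →
    ∃ x, IsLUB S x

theorem TopologicalSpace.le_nhds_mkOfNhds {α : Type*} (n : α → Filter α) (a : α) :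
    n a ≤ @nhds α (TopologicalSpace.mkOfNhds n) a := by
  let _ : TopologicalSpace α := .mkOfNhds n
  exact le_nhds_iff.2 fun _ has hs => hs a has

section

variable {E : Type*} [Lattice E] [AddCommGroup E]

def disjointComplement (S : Set E) : Set E :=
  {x | ∀ a ∈ S, |x| ⊓ |a| = 0}

theorem disjointComplement_anti {S T : Set E} (h : S ⊆ T) :
    disjointComplement T ⊆ disjointComplement S :=
  fun _ hx a ha => hx a (h ha)

theorem disjointComplement_iUnion {ι : Sort*} (S : ι → Set E) :
    disjointComplement (⋃ i, S i) = ⋂ i, disjointComplement (S i) := by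
  ext x
  simp only [disjointComplement, mem_iUnion, mem_iInter, mem_ofPred_eq]
  exact ⟨fun h i a ha => h a ⟨i, ha⟩, fun h a ⟨i, ha⟩ => h i a ha⟩

theorem unbNhdsZero_le_nhds_unbTopology (τ : TopologicalSpace E) (A : Set E) :
    unbNhdsZero τ A ≤ @nhds E (unbTopology τ A) 0 :=
  calc unbNhdsZero τ A = map ((0 : E) + ·) (unbNhdsZero τ A) := by simp
    _ ≤ _ := by exact TopologicalSpace.le_nhds_mkOfNhds _ 0

theorem IsOrderIdeal.nsmul_mem [Module ℝ E] {I : Set E} (hI : IsOrderIdeal I) {a : E}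
    (ha : a ∈ I) (n : ℕ) : n • a ∈ I := by
  simpa only [Nat.cast_smul_eq_nsmul] using hI.2.2.1 n a ha

variable [AddLeftMono E]

theorem IsSolid.mem_of_nonneg_of_le {S : Set E} (hS : IsSolid S) {x y : E} (hx : x ∈ S)
    (hy : 0 ≤ y) (hyx : y ≤ x) : y ∈ S :=
  hS hx <| by rwa [abs_of_nonneg hy, abs_of_nonneg (hy.trans hyx)]

theorem exists_finite_disjointComplement_subset_of_mem_unbNhdsZero {τ : TopologicalSpace E}
    {A s : Set E} (hs : s ∈ unbNhdsZero τ A) :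
    ∃ F : Set E, F.Finite ∧ F ⊆ {a ∈ A | 0 ≤ a} ∧ disjointComplement F ⊆ s := by
  rw [unbNhdsZero, iInf_subtype', mem_iInf] at hs
  obtain ⟨I, hI, V, hV, rfl⟩ := hs
  refine ⟨Subtype.val '' I, hI.image _, image_subset_iff.2 fun i _ => i.2, fun x hx => ?_⟩
  refine mem_iInter.2 fun ⟨⟨a, haA, ha0⟩, hi⟩ => ?_
  obtain ⟨W, hW, hWV⟩ := mem_comap.1 (hV ⟨⟨a, haA, ha0⟩, hi⟩)
  have hxi : |x| ⊓ a = 0 := by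
    simpa [abs_of_nonneg ha0] using hx a ⟨_, hi, rfl⟩
  exact hWV (by simpa [hxi] using mem_of_mem_nhds hW)

theorem exists_countable_disjointComplement_subset_ker {τ : TopologicalSpace E} {A : Set E}
    {f : Filter E} [f.IsCountablyGenerated] (hf : unbNhdsZero τ A ≤ f) :
    ∃ B : Set E, B.Countable ∧ B ⊆ {a ∈ A | 0 ≤ a} ∧
      disjointComplement B ⊆ f.ker := by
  obtain ⟨s, hs⟩ := f.exists_antitone_basis
  choose F hFfin hFA hFs using fun n =>
    exists_finite_disjointComplement_subset_of_mem_unbNhdsZero (hf (hs.mem n))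
  refine ⟨⋃ n, F n, countable_iUnion fun n => (hFfin n).countable, iUnion_subset hFA, ?_⟩
  intro x hx
  rw [disjointComplement_iUnion, mem_iInter] at hx
  refine mem_ker.2 fun t ht => ?_
  obtain ⟨n, hnt⟩ := hs.mem_iff.1 ht
  exact hnt (hFs n (hx n))

variable [Module ℝ E]

/-- All multiples of `(y - y ⊓ u) ⊓ a` stay below `y`, so the Archimedean property kills it. -/
theorem IsOrderIdeal.inf_eq_zero_of_mem_upperBounds (hArch : VLArchimedean E) {I : Set E}
    (hI : IsOrderIdeal I) {y u a : E} (hy : 0 ≤ y) (hu : u ∈ upperBounds (I ∩ Icc 0 y))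
    (ha : a ∈ I) (ha0 : 0 ≤ a) : (y - y ⊓ u) ⊓ a = 0 := by
  set b := (y - y ⊓ u) ⊓ a
  have hb0 : 0 ≤ b := le_inf (sub_nonneg.2 inf_le_left) ha0
  have hbI : b ∈ I := hI.2.2.2.mem_of_nonneg_of_le ha hb0 inf_le_right
  refine hArch b y hb0 fun n => ?_
  induction n with
  | zero => simpa using hy
  | succ n ih =>
    have hnu : n • b ≤ u := hu ⟨hI.nsmul_mem hbI n, nsmul_nonneg hb0 n, ih⟩
    have hb : b ≤ y - n • b := inf_le_left.trans (sub_le_sub_left (le_inf ih hnu) y)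
    calc (n + 1) • b = n • b + b := succ_nsmul b n
      _ ≤ n • b + (y - n • b) := add_le_add_right hb _
      _ = y := add_sub_cancel _ _

theorem IsOrderIdeal.isLUB_inter_Icc (hArch : VLArchimedean E) {I : Set E}
    (hI : IsOrderIdeal I) (hId : disjointComplement I ⊆ {0}) {y : E} (hy : 0 ≤ y) :
    IsLUB (I ∩ Icc 0 y) y := by
  refine ⟨fun _ hd => hd.2.2, fun u hu => ?_⟩
  have hw0 : 0 ≤ y - y ⊓ u := sub_nonneg.2 inf_le_left
  have hw : y - y ⊓ u ∈ disjointComplement I := fun a ha => by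
    rw [abs_of_nonneg hw0]
    exact hI.inf_eq_zero_of_mem_upperBounds hArch hy hu (hI.2.2.2 ha (abs_abs a).le)
      (abs_nonneg a)
  exact (sub_eq_zero.1 (hId hw)).le.trans inf_le_right

theorem IsBand.eq_univ (hArch : VLArchimedean E) {C : Set E} (hC : IsBand C)
    (hCd : disjointComplement C ⊆ {0}) : C = univ := by
  refine eq_univ_of_forall fun x => hC.1.2.2.2 ?_ (abs_abs x).ge
  exact hC.2 _ inter_subset_left _ (hC.1.isLUB_inter_Icc hArch hCd (abs_nonneg x))

theorem bandGenerated_eq_univ (hArch : VLArchimedean E) {B : Set E}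
    (hB : disjointComplement B ⊆ {0}) : bandGenerated B = univ :=
  sInter_eq_univ.2 fun _ ⟨hC, hBC⟩ => hC.eq_univ hArch ((disjointComplement_anti hBC).trans hB)

end

theorem stmt0_general (hArch : VLArchimedean X) (τ : TopologicalSpace X)
    (A : Set X) (hsub : Submetrizable (unbTopology τ A)) :
    ∃ B ⊆ A, CountableOrderBasis B := by
  obtain ⟨σ, -, -, hσ, hle⟩ := hsub
  obtain ⟨B, hBc, hBA, hB⟩ := exists_countable_disjointComplement_subset_ker
    ((unbNhdsZero_le_nhds_unbTopology τ A).trans (nhds_mono hle))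
  refine ⟨B, fun a ha => (hBA ha).1, hBc, bandGenerated_eq_univ hArch ?_⟩
  rwa [ker_nhds] at hB

/-- if `u_A τ` is submetrizable then some subset of `A` is a countable
order basis for `X`. -/
theorem stmt0 (hArch : VLArchimedean X) (τ : TopologicalSpace X) (hτ : IsLocallySolidTop τ)
    (A : Set X) (hA : IsOrderIdeal A) (hsub : Submetrizable (unbTopology τ A)) :
    ∃ B ⊆ A, CountableOrderBasis B :=
  stmt0_general hArch τ A hsub
end

section
/- Let (X,τ) be a locally solid vector lattice such that the unbounded topology uτ is metrizable. Then there exists a sequence (e_n) in X_+ such that the τ-closure of the ideal generated by {e_n : n ∈ ℕ} is all of X. -/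
open Filter Set Topology

variable {X : Type*} [Lattice X] [AddCommGroup X] [Module ℝ X]
  [CovariantClass X X (· + ·) (· ≤ ·)] [PosSMulMono ℝ X]

/-!
Choose a countable base of `uτ`-neighbourhoods of zero of the form `{y : |y| ⊓ eₘ ∈ Uₘ}` with
`eₘ ≥ 0` and `Uₘ` a solid `τ`-neighbourhood of zero. For `x ≥ 0` the vectors `x ⊓ k • eₘ` lie in
the ideal generated by the `eₘ`, and the error `z = x - x ⊓ k • eₘ = (x - k • eₘ)⁺` satisfies
`z ⊓ eₘ ≤ x / k`, which is `τ`-small for large `k`. Since the `uτ`-neighbourhood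
`{y : |y| ⊓ x ∈ V}` contains a basic one and `z ⊓ x = z`, the error is `τ`-small as well.
Thus `X₊`, and hence `X = X₊ - X₊`, lies in the `τ`-closure of the ideal.
-/

section VectorLattice

variable {E : Type*} [Lattice E] [AddCommGroup E]

section LatticeOrderedGroup

variable [AddLeftMono E]

lemma add_inf_le_inf_add_inf {a b c : E} (ha : 0 ≤ a) (hb : 0 ≤ b) (hc : 0 ≤ c) :
    (a + b) ⊓ c ≤ a ⊓ c + b ⊓ c := by
  rw [add_inf, inf_add, inf_add]
  exact le_inf (le_inf inf_le_left (inf_le_right.trans (le_add_of_nonneg_right hb)))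
    (le_inf (inf_le_right.trans (le_add_of_nonneg_left ha))
      (inf_le_right.trans (le_add_of_nonneg_right hc)))

lemma abs_add_inf_le {a : E} (p q : E) (ha : 0 ≤ a) : |p + q| ⊓ a ≤ |p| ⊓ a + |q| ⊓ a :=
  (inf_le_inf_right a (abs_add_le p q)).trans
    (add_inf_le_inf_add_inf (abs_nonneg p) (abs_nonneg q) ha)

lemma nsmul_inf_le {a b : E} (ha : 0 ≤ a) (hb : 0 ≤ b) (n : ℕ) : (n • a) ⊓ b ≤ n • (a ⊓ b) := by
  induction n with
  | zero => simp only [zero_nsmul]; exact inf_le_left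
  | succ n ih =>
    rw [succ_nsmul, succ_nsmul]
    exact (add_inf_le_inf_add_inf (nsmul_nonneg ha n) ha hb).trans (add_le_add ih le_rfl)

/-- `(k • w - x)⁺` lies below both `k • w ≤ k • (x - k • e)⁺` and `(x - k • e)⁻`, which are
disjoint. -/
lemma nsmul_posPart_sub_nsmul_inf_le {x e : E} (hx : 0 ≤ x) (he : 0 ≤ e) (k : ℕ) :
    k • ((x - k • e)⁺ ⊓ e) ≤ x := by
  set w := (x - k • e)⁺ ⊓ e
  have hw : 0 ≤ k • w := nsmul_nonneg (le_inf (posPart_nonneg _) he) k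
  have h_disjoint : (k • w) ⊓ (x - k • e)⁻ ≤ 0 :=
    calc (k • w) ⊓ (x - k • e)⁻ ≤ (k • (x - k • e)⁺) ⊓ (x - k • e)⁻ :=
          inf_le_inf_right _ (nsmul_le_nsmul_right inf_le_left k)
      _ ≤ k • ((x - k • e)⁺ ⊓ (x - k • e)⁻) :=
          nsmul_inf_le (posPart_nonneg _) (negPart_nonneg _) k
      _ = 0 := by rw [posPart_inf_negPart_eq_zero, nsmul_zero]
  have h_le_w : (k • w - x)⁺ ≤ k • w := sup_le (sub_le_self _ hx) hw
  have h_le_neg : (k • w - x)⁺ ≤ (x - k • e)⁻ := by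
    rw [← posPart_neg, neg_sub]
    exact posPart_mono (sub_le_sub_right (nsmul_le_nsmul_right inf_le_right k) x)
  have h_zero : (k • w - x)⁺ = 0 :=
    le_antisymm ((le_inf h_le_w h_le_neg).trans h_disjoint) (posPart_nonneg _)
  exact sub_nonpos.1 (posPart_eq_zero.1 h_zero)

lemma posPart_sub_nsmul_inf_le_inv_smul [Module ℝ E] [PosSMulMono ℝ E] {x e : E} (hx : 0 ≤ x)
    (he : 0 ≤ e) {k : ℕ} (hk : 0 < k) :
    (x - k • e)⁺ ⊓ e ≤ (k : ℝ)⁻¹ • x := by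
  have hk' : (0 : ℝ) < k := Nat.cast_pos.2 hk
  have h := smul_le_smul_of_nonneg_left (nsmul_posPart_sub_nsmul_inf_le hx he k)
    (inv_nonneg.2 hk'.le)
  rwa [← Nat.cast_smul_eq_nsmul ℝ, smul_smul, inv_mul_cancel₀ hk'.ne', one_smul] at h

lemma IsSolid.mem_of_nonneg_of_le_s6 {S : Set E} (hS : IsSolid S) {a b : E} (hb : b ∈ S)
    (ha : 0 ≤ a) (hab : a ≤ b) : a ∈ S :=
  hS hb (by rwa [abs_of_nonneg ha, abs_of_nonneg (ha.trans hab)])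

end LatticeOrderedGroup

variable [Module ℝ E]

lemma isOrderIdeal_idealGenerated (A : Set E) : IsOrderIdeal (idealGenerated A) :=
  ⟨mem_sInter.2 fun _ hJ => hJ.1.1,
    fun x hx y hy => mem_sInter.2 fun J hJ => hJ.1.2.1 x (hx J hJ) y (hy J hJ),
    fun c x hx => mem_sInter.2 fun J hJ => hJ.1.2.2.1 c x (hx J hJ),
    fun _ _ hx hle => mem_sInter.2 fun J hJ => hJ.1.2.2.2 (hx J hJ) hle⟩

lemma subset_idealGenerated (A : Set E) : A ⊆ idealGenerated A :=
  fun _ hx => mem_sInter.2 fun _ hJ => hJ.2 hx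

lemma IsOrderIdeal.sub_mem {I : Set E} (hI : IsOrderIdeal I) {x y : E} (hx : x ∈ I)
    (hy : y ∈ I) : x - y ∈ I := by
  have h := hI.2.1 x hx _ (hI.2.2.1 (-1) y hy)
  rwa [neg_one_smul, ← sub_eq_add_neg] at h

lemma IsOrderIdeal.closure_eq_univ [AddLeftMono E] [TopologicalSpace E] [ContinuousSub E]
    {I : Set E} (hI : IsOrderIdeal I) (h : ∀ x : E, 0 ≤ x → x ∈ closure I) : closure I = univ := by
  refine eq_univ_of_forall fun x => ?_
  rw [← posPart_sub_negPart x]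
  exact map_mem_closure₂ continuous_sub (h _ (posPart_nonneg x)) (h _ (negPart_nonneg x))
    fun a ha b hb => hI.sub_mem ha hb

section UnboundedTopology

variable [AddLeftMono E] [τ : TopologicalSpace E]

lemma comap_abs_inf_nhds_zero_antitone (hτ : IsLocallySolidTop τ) {a c : E} (hac : a ≤ c)
    (ha : 0 ≤ a) :
    comap (fun x : E => |x| ⊓ c) (𝓝 0) ≤ comap (fun x : E => |x| ⊓ a) (𝓝 0) := by
  intro s hs
  obtain ⟨U, hU, hUs⟩ := mem_comap.1 hs
  obtain ⟨V, hV, hVsolid, hVU⟩ := hτ.2.2 U hU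
  exact mem_comap.2 ⟨V, hV, fun x hx => hUs (hVU (hVsolid.mem_of_nonneg_of_le_s6 hx
    (le_inf (abs_nonneg x) ha) (inf_le_inf_left _ hac)))⟩

lemma mem_unbNhdsZero_univ_iff (hτ : IsLocallySolidTop τ) {s : Set E} :
    s ∈ unbNhdsZero τ univ ↔
      ∃ a : E, 0 ≤ a ∧ ∃ U ∈ 𝓝 0, IsSolid U ∧ (fun x : E => |x| ⊓ a) ⁻¹' U ⊆ s := by
  have hdir : DirectedOn ((fun a : E => comap (fun x : E => |x| ⊓ a) (𝓝 0)) ⁻¹'o (· ≥ ·))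
      {a : E | a ∈ univ ∧ 0 ≤ a} := by
    rintro a ⟨-, ha⟩ b ⟨-, hb⟩
    exact ⟨a ⊔ b, ⟨trivial, ha.trans le_sup_left⟩,
      comap_abs_inf_nhds_zero_antitone hτ le_sup_left ha,
      comap_abs_inf_nhds_zero_antitone hτ le_sup_right hb⟩
  rw [unbNhdsZero, mem_biInf_of_directed hdir ⟨0, trivial, le_rfl⟩]
  constructor
  · rintro ⟨a, ⟨-, ha⟩, hsa⟩
    obtain ⟨U, hU, hUs⟩ := mem_comap.1 hsa
    obtain ⟨V, hV, hVsolid, hVU⟩ := hτ.2.2 U hU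
    exact ⟨a, ha, V, hV, hVsolid, (preimage_mono hVU).trans hUs⟩
  · rintro ⟨a, ha, U, hU, -, hsub⟩
    exact ⟨a, ⟨trivial, ha⟩, mem_comap.2 ⟨U, hU, hsub⟩⟩

lemma zero_mem_of_mem_unbNhdsZero (hτ : IsLocallySolidTop τ) {s : Set E}
    (hs : s ∈ unbNhdsZero τ univ) : (0 : E) ∈ s := by
  obtain ⟨a, ha, U, hU, -, hsub⟩ := (mem_unbNhdsZero_univ_iff hτ).1 hs
  refine hsub ?_
  rw [mem_preimage, abs_zero, inf_eq_left.2 ha]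
  exact mem_of_mem_nhds hU

lemma exists_add_subset_of_mem_unbNhdsZero (hτ : IsLocallySolidTop τ) {s : Set E}
    (hs : s ∈ unbNhdsZero τ univ) :
    ∃ v ∈ unbNhdsZero τ univ, ∀ p ∈ v, ∀ q ∈ v, p + q ∈ s := by
  obtain ⟨a, ha, U, hU, hUsolid, hsub⟩ := (mem_unbNhdsZero_univ_iff hτ).1 hs
  have := hτ.1
  obtain ⟨W, hW, hWadd⟩ := exists_nhds_zero_half hU
  obtain ⟨V, hV, hVsolid, hVW⟩ := hτ.2.2 W hW
  refine ⟨(fun x : E => |x| ⊓ a) ⁻¹' V,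
    (mem_unbNhdsZero_univ_iff hτ).2 ⟨a, ha, V, hV, hVsolid, subset_rfl⟩, fun p hp q hq => ?_⟩
  exact hsub (hUsolid.mem_of_nonneg_of_le_s6 (hWadd _ (hVW hp) _ (hVW hq))
    (le_inf (abs_nonneg _) ha) (abs_add_inf_le p q ha))

lemma nhds_unbTopology (hτ : IsLocallySolidTop τ) (x : E) :
    @nhds E (unbTopology τ univ) x = map (x + ·) (unbNhdsZero τ univ) := by
  refine TopologicalSpace.nhds_mkOfNhds _ _ (fun y s hs => ?_) fun y s hs => ?_
  · simpa using zero_mem_of_mem_unbNhdsZero hτ (mem_map.1 hs)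
  · obtain ⟨v, hv, hvv⟩ := exists_add_subset_of_mem_unbNhdsZero hτ (mem_map.1 hs)
    filter_upwards [image_mem_map hv]
    rintro _ ⟨w, hw, rfl⟩
    exact mem_map.2 (mem_of_superset hv fun q hq => by simpa [add_assoc] using hvv w hw q hq)

lemma exists_seq_basis_unbNhdsZero (hτ : IsLocallySolidTop τ)
    (hmet : @TopologicalSpace.MetrizableSpace E (unbTopology τ univ)) :
    ∃ (e : ℕ → E) (U : ℕ → Set E), (∀ m, 0 ≤ e m) ∧ (∀ m, U m ∈ 𝓝 0) ∧ (∀ m, IsSolid (U m)) ∧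
      ∀ s ∈ unbNhdsZero τ univ, ∃ m, (fun x : E => |x| ⊓ e m) ⁻¹' U m ⊆ s := by
  have hnhds : @nhds E (unbTopology τ univ) 0 = unbNhdsZero τ univ := by
    simp [nhds_unbTopology hτ]
  have : (unbNhdsZero τ univ).IsCountablyGenerated := by
    rw [← hnhds]
    let _ := unbTopology τ univ
    infer_instance
  obtain ⟨B, hB⟩ := (unbNhdsZero τ univ).exists_antitone_basis
  choose e he U hU hUsolid hUB using
    fun m => (mem_unbNhdsZero_univ_iff hτ).1 (hB.1.mem_of_mem (i := m) trivial)
  refine ⟨e, U, he, hU, hUsolid, fun s hs => ?_⟩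
  obtain ⟨m, -, hm⟩ := hB.1.mem_iff.1 hs
  exact ⟨m, (hUB m).trans hm⟩

lemma nonneg_mem_closure_idealGenerated [PosSMulMono ℝ E] (hτ : IsLocallySolidTop τ)
    {e : ℕ → E} {U : ℕ → Set E} (he : ∀ m, 0 ≤ e m) (hU : ∀ m, U m ∈ 𝓝 0)
    (hUsolid : ∀ m, IsSolid (U m))
    (hbasis : ∀ s ∈ unbNhdsZero τ univ, ∃ m, (fun x : E => |x| ⊓ e m) ⁻¹' U m ⊆ s)
    {x : E} (hx : 0 ≤ x) : x ∈ closure (idealGenerated (range e)) := by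
  have := hτ.1
  have := hτ.2.1
  rw [mem_closure_iff_nhds]
  intro W hW
  rw [← map_add_left_nhds_zero] at hW
  obtain ⟨V, hV, hVsolid, hVW⟩ := hτ.2.2 _ hW
  obtain ⟨m, hm⟩ :=
    hbasis _ ((mem_unbNhdsZero_univ_iff hτ).2 ⟨x, hx, V, hV, hVsolid, subset_rfl⟩)
  have h_tendsto : Tendsto (fun k : ℕ => (k : ℝ)⁻¹ • x) atTop (𝓝 0) := by
    simpa using (tendsto_inv_atTop_nhds_zero_nat (𝕜 := ℝ)).smul_const x
  obtain ⟨k, hkU, hk⟩ :=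
    ((h_tendsto.eventually_mem (hU m)).and (eventually_gt_atTop 0)).exists
  set z := (x - k • e m)⁺
  have hz : 0 ≤ z := posPart_nonneg _
  have hzx : z ≤ x := sup_le (sub_le_self _ (nsmul_nonneg (he m) k)) hx
  have hz_inf : |z| ⊓ e m ∈ U m := by
    rw [abs_of_nonneg hz]
    exact (hUsolid m).mem_of_nonneg_of_le_s6 hkU (le_inf hz (he m))
      (posPart_sub_nsmul_inf_le_inv_smul hx (he m) hk)
  have hzV : z ∈ V := by
    simpa [abs_of_nonneg hz, inf_eq_left.2 hzx] using hm hz_inf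
  refine ⟨x ⊓ k • e m, ?_, ?_⟩
  · rw [inf_eq_sub_posPart_sub, sub_eq_add_neg]
    exact hVW (hVsolid hzV (abs_neg z).le)
  · have hI := isOrderIdeal_idealGenerated (range e)
    have hke : k • e m ∈ idealGenerated (range e) := by
      rw [← Nat.cast_smul_eq_nsmul ℝ]
      exact hI.2.2.1 _ _ (subset_idealGenerated _ (mem_range_self m))
    exact hI.2.2.2.mem_of_nonneg_of_le_s6 hke (le_inf hx (nsmul_nonneg (he m) k)) inf_le_right

end UnboundedTopology

end VectorLattice

theorem stmt6_general (τ : TopologicalSpace X) (hτ : IsLocallySolidTop τ)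
    (hmet : @TopologicalSpace.MetrizableSpace X (unbTopology τ Set.univ)) :
    ∃ e : ℕ → X, (∀ n, 0 ≤ e n) ∧
      @closure X τ (idealGenerated (Set.range e)) = Set.univ := by
  obtain ⟨e, U, he, hU, hUsolid, hbasis⟩ := exists_seq_basis_unbNhdsZero hτ hmet
  have := hτ.1
  exact ⟨e, he, (isOrderIdeal_idealGenerated _).closure_eq_univ fun x hx =>
    nonneg_mem_closure_idealGenerated hτ he hU hUsolid hbasis hx⟩

/-- if `u τ` is metrizable then there is a sequence of positive vectors
generating a `τ`-dense ideal. -/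
theorem stmt6 (hArch : VLArchimedean X) (τ : TopologicalSpace X) (hτ : IsLocallySolidTop τ)
    (hmet : @TopologicalSpace.MetrizableSpace X (unbTopology τ Set.univ)) :
    ∃ e : ℕ → X, (∀ n, 0 ≤ e n) ∧
      @closure X τ (idealGenerated (Set.range e)) = Set.univ :=
  stmt6_general τ hτ hmet
end
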